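/- arXiv:1605.03533 — 4 statements merged into one kernel-verified Lean document; each statement's English description precedes it below -/
import Mathlib

section
/- A graph H is harmonic if and only if every main eigenvalue of H belongs to the set {0, λ₁}, where λ₁ is the largest eigenvalue of H. -/
open Matrix Finset Polynomial

variable {V : Type*} [Fintype V] [DecidableEq V]

/-- `μ` is an eigenvalue of the adjacency matrix of `G`. -/
def SimpleGraph.IsEigenvalue (G : SimpleGraph V) [DecidableRel G.Adj] (μ : ℝ) : Prop :=
  ∃ x : V → ℝ, x ≠ 0 ∧ (G.adjMatrix ℝ) *ᵥ x = μ • x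

/-- `μ` is a main eigenvalue: some associated eigenvector is not orthogonal
to the all-ones vector. -/
def SimpleGraph.IsMainEigenvalue (G : SimpleGraph V) [DecidableRel G.Adj] (μ : ℝ) : Prop :=
  ∃ x : V → ℝ, x ≠ 0 ∧ (G.adjMatrix ℝ) *ᵥ x = μ • x ∧ ∑ v, x v ≠ 0

/-- `μ` is a non-main eigenvalue: it is an eigenvalue whose eigenspace is
orthogonal to the all-ones vector. -/
def SimpleGraph.IsNonMainEigenvalue (G : SimpleGraph V) [DecidableRel G.Adj] (μ : ℝ) : Prop :=
  G.IsEigenvalue μ ∧ ¬ G.IsMainEigenvalue μ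

/-- The multiplicity of `μ` as an eigenvalue of `G` (as a root of the
characteristic polynomial of the adjacency matrix). -/
noncomputable def SimpleGraph.eigMult (G : SimpleGraph V) [DecidableRel G.Adj] (μ : ℝ) : ℕ :=
  ((G.adjMatrix ℝ).charpoly).rootMultiplicity μ

/-- `G` is harmonic: its degree vector is an eigenvector of the adjacency matrix
associated with a positive integer eigenvalue. -/
def SimpleGraph.IsHarmonic (G : SimpleGraph V) [DecidableRel G.Adj] : Prop :=
  ∃ ℓ : ℕ, 0 < ℓ ∧
    (G.adjMatrix ℝ) *ᵥ (fun v => (G.degree v : ℝ)) = (ℓ : ℝ) • (fun v => (G.degree v : ℝ))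

/-!
Write `A` for the adjacency matrix and `d = A *ᵥ 1` for the degree vector. If `A *ᵥ d = ℓ • d`,
pairing a main eigenvector `x` with `1` and with `d` gives `d ⬝ᵥ x = μ ∑ xᵢ` and
`(μ - ℓ) (d ⬝ᵥ x) = 0`, so `μ ∈ {0, ℓ}`; comparing an eigenvector `z` with the nonnegative
vector `|z|` shows that no eigenvalue exceeds `ℓ`. Conversely, in an orthonormal eigenbasis only
main eigenvectors have a nonzero component along `1`, so `A *ᵥ d = λ₁ • d`. Reading this at a
vertex of positive degree makes `λ₁` a positive rational, and as a root of the monic integral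
characteristic polynomial it is then a positive integer.
-/

namespace Matrix

variable {n : Type*} [Fintype n]

theorem IsSymm.dotProduct_mulVec_comm {R : Type*} [CommSemiring R] {A : Matrix n n R}
    (hA : A.IsSymm) (x y : n → R) : x ⬝ᵥ A *ᵥ y = y ⬝ᵥ A *ᵥ x := by
  simpa only [hA.eq] using dotProduct_transpose_mulVec A x y

theorem IsSymm.eq_zero_or_eq_of_mulVec_mulVec_one_eq_smul {R : Type*} [CommRing R]
    [NoZeroDivisors R] {A : Matrix n n R} (hA : A.IsSymm) {ℓ μ : R} {x : n → R}
    (hℓ : A *ᵥ (A *ᵥ 1) = ℓ • A *ᵥ 1) (hx : A *ᵥ x = μ • x) (hsum : ∑ i, x i ≠ 0) :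
    μ = 0 ∨ μ = ℓ := by
  set d := A *ᵥ 1
  have hdx : d ⬝ᵥ x = μ * ∑ i, x i := by
    rw [dotProduct_comm, hA.dotProduct_mulVec_comm, hx, dotProduct_smul, one_dotProduct,
      smul_eq_mul]
  have hμℓ : (μ - ℓ) * (d ⬝ᵥ x) = 0 := by
    have hμ : d ⬝ᵥ A *ᵥ x = μ * (d ⬝ᵥ x) := by rw [hx, dotProduct_smul, smul_eq_mul]
    have hℓ' : d ⬝ᵥ A *ᵥ x = ℓ * (d ⬝ᵥ x) := by
      rw [hA.dotProduct_mulVec_comm, hℓ, dotProduct_smul, smul_eq_mul, dotProduct_comm]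
    rw [sub_mul, ← hμ, hℓ', sub_self]
  rcases mul_eq_zero.1 hμℓ with h | h
  · exact Or.inr (sub_eq_zero.1 h)
  · rw [hdx] at h
    exact Or.inl ((mul_eq_zero.1 h).resolve_right hsum)

section LinearOrderedCommRing

variable {R : Type*} [CommRing R] [LinearOrder R] [IsStrictOrderedRing R] {A : Matrix n n R}

theorem abs_smul_abs_le_mulVec_abs (hA : ∀ i j, 0 ≤ A i j) {μ : R} {z : n → R}
    (hz : A *ᵥ z = μ • z) : |μ| • |z| ≤ A *ᵥ |z| := fun i =>
  calc |μ| * |z i| = |(A *ᵥ z) i| := by rw [hz, Pi.smul_apply, smul_eq_mul, abs_mul]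
    _ ≤ ∑ j, |A i j * z j| := Finset.abs_sum_le_sum_abs _ _
    _ = (A *ᵥ |z|) i := by simp only [mulVec, dotProduct, abs_mul, abs_of_nonneg (hA i _),
        Pi.abs_apply]

/-- Pairing `|μ| • |z| ≤ A *ᵥ |z|` with `1` shows `(A *ᵥ 1) ⬝ᵥ |z| > 0`; pairing it with
`A *ᵥ 1` then bounds `|μ|` by `ℓ`. -/
theorem IsSymm.abs_le_of_mulVec_mulVec_one_eq_smul (hA : A.IsSymm) (hA₀ : ∀ i j, 0 ≤ A i j)
    {ℓ μ : R} {z : n → R} (hℓ : A *ᵥ (A *ᵥ 1) = ℓ • A *ᵥ 1) (hz₀ : z ≠ 0)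
    (hz : A *ᵥ z = μ • z) (hμ : μ ≠ 0) : |μ| ≤ ℓ := by
  set d := A *ᵥ 1
  set y := |z|
  have hd₀ : 0 ≤ d := fun i => Finset.sum_nonneg fun j _ => mul_nonneg (hA₀ i j) zero_le_one
  have hAy := abs_smul_abs_le_mulVec_abs hA₀ hz
  have hy : 0 < 1 ⬝ᵥ y := by
    obtain ⟨i, hi⟩ := Function.ne_iff.1 hz₀
    rw [one_dotProduct]
    exact Finset.sum_pos' (fun j _ => abs_nonneg (z j)) ⟨i, Finset.mem_univ i, abs_pos.2 hi⟩
  have hdy : |μ| * (1 ⬝ᵥ y) ≤ d ⬝ᵥ y :=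
    calc |μ| * (1 ⬝ᵥ y) = 1 ⬝ᵥ (|μ| • y) := by rw [dotProduct_smul, smul_eq_mul]
      _ ≤ 1 ⬝ᵥ A *ᵥ y := dotProduct_le_dotProduct_of_nonneg_left hAy zero_le_one
      _ = d ⬝ᵥ y := by rw [hA.dotProduct_mulVec_comm, dotProduct_comm]
  have hdy_pos : 0 < d ⬝ᵥ y := (mul_pos (abs_pos.2 hμ) hy).trans_le hdy
  refine le_of_mul_le_mul_right ?_ hdy_pos
  calc |μ| * (d ⬝ᵥ y) = d ⬝ᵥ (|μ| • y) := by rw [dotProduct_smul, smul_eq_mul]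
    _ ≤ d ⬝ᵥ A *ᵥ y := dotProduct_le_dotProduct_of_nonneg_left hAy hd₀
    _ = ℓ * (d ⬝ᵥ y) := by
      rw [hA.dotProduct_mulVec_comm, hℓ, dotProduct_smul, smul_eq_mul, dotProduct_comm]

end LinearOrderedCommRing

theorem IsHermitian.mulVec_mulVec_one_eq_smul [DecidableEq n] {A : Matrix n n ℝ}
    (hA : A.IsHermitian) {ℓ : ℝ}
    (hmain : ∀ μ x, x ≠ 0 → A *ᵥ x = μ • x → ∑ i, x i ≠ 0 → μ = 0 ∨ μ = ℓ) :
    A *ᵥ (A *ᵥ 1) = ℓ • A *ᵥ 1 := by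
  have hS : A.IsSymm := isHermitian_iff_isSymm.1 hA
  set b := hA.eigenvectorBasis
  rw [← sub_eq_zero]
  set w := A *ᵥ (A *ᵥ 1) - ℓ • A *ᵥ 1
  suffices h : ∀ j, w ⬝ᵥ b j = 0 by
    have : b.repr (WithLp.toLp 2 w) = 0 := by
      ext j
      simpa [b.repr_apply_apply, EuclideanSpace.inner_eq_star_dotProduct] using h j
    simpa using this
  intro j
  set μ := hA.eigenvalues j
  have hev : A *ᵥ b j = μ • b j := hA.mulVec_eigenvectorBasis j
  have hpair : ∀ v, A *ᵥ v ⬝ᵥ b j = μ * (v ⬝ᵥ b j) := fun v => by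
    rw [dotProduct_comm, hS.dotProduct_mulVec_comm, hev, dotProduct_smul, smul_eq_mul]
  have hw : w ⬝ᵥ b j = μ * (μ - ℓ) * ∑ i, b j i := by
    rw [sub_dotProduct, smul_dotProduct, hpair, hpair, one_dotProduct, smul_eq_mul]
    ring
  by_cases hsum : ∑ i, b j i = 0
  · rw [hw, hsum, mul_zero]
  · have hb₀ : (b j : n → ℝ) ≠ 0 := (WithLp.ofLp_eq_zero 2).ne.2 (b.orthonormal.ne_zero j)
    rcases hmain μ _ hb₀ hev hsum with h | h <;> simp [hw, h]

theorem isIntegral_of_map_mulVec_eq_smul [DecidableEq n] {R K : Type*} [CommRing R] [Field K]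
    [Algebra R K] (A : Matrix n n R) {μ : K} {z : n → K} (hz₀ : z ≠ 0)
    (hz : A.map (algebraMap R K) *ᵥ z = μ • z) : IsIntegral R μ := by
  refine ⟨A.charpoly, A.charpoly_monic, ?_⟩
  rw [Polynomial.eval₂_eq_eval_map, ← charpoly_map, eval_charpoly]
  refine exists_mulVec_eq_zero_iff.1 ⟨z, hz₀, ?_⟩
  rw [sub_mulVec, hz, scalar_apply]
  ext i
  simp

end Matrix

theorem exists_intCast_eq_of_isIntegral_of_mul_eq {K : Type*} [Field K] [CharZero K] {x : K}
    (hx : IsIntegral ℤ x) {a b : ℤ} (hb : b ≠ 0) (h : x * b = a) : ∃ k : ℤ, x = k := by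
  have hq : x = algebraMap ℚ K (a / b) := by
    rw [eq_ratCast, Rat.cast_div, Rat.cast_intCast, Rat.cast_intCast,
      eq_div_iff (by exact_mod_cast hb), h]
  rw [hq] at hx ⊢
  obtain ⟨k, hk⟩ := IsIntegrallyClosed.isIntegral_iff.1
    ((isIntegral_algebraMap_iff (algebraMap ℚ K).injective).1 hx)
  exact ⟨k, by rw [← hk, eq_intCast, eq_ratCast, Rat.cast_intCast]⟩

namespace SimpleGraph

variable {W : Type*} (G : SimpleGraph W) [DecidableRel G.Adj]

theorem map_adjMatrix_int {R : Type*} [Ring R] :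
    (G.adjMatrix ℤ).map (algebraMap ℤ R) = G.adjMatrix R := by
  ext v w
  by_cases h : G.Adj v w <;> simp [h]

variable [Fintype W]

theorem adjMatrix_mulVec_one {R : Type*} [NonAssocSemiring R] :
    G.adjMatrix R *ᵥ 1 = fun v => (G.degree v : R) := by
  ext v
  simp

variable {G}

/-- If some vertex `v` has positive degree, then `ℓ * deg v` is the (positive) sum of the degrees
of the neighbours of `v`, so the algebraic integer `ℓ` is a positive rational, hence in `ℕ`. -/
theorem isHarmonic_of_mulVec_degree_eq_smul {ℓ : ℝ} (hℓ : IsIntegral ℤ ℓ)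
    (hd : G.adjMatrix ℝ *ᵥ (fun v => (G.degree v : ℝ)) = ℓ • fun v => (G.degree v : ℝ)) :
    G.IsHarmonic := by
  by_cases hG : ∀ v, G.degree v = 0
  · refine ⟨1, one_pos, ?_⟩
    ext
    simp [hG]
  obtain ⟨v, hv⟩ := not_forall.1 hG
  set m := ∑ u ∈ G.neighborFinset v, G.degree u
  have hdeg : ℓ * G.degree v = m := by
    simpa [m] using (congrFun hd v).symm
  have hm : 0 < m := Finset.sum_pos
    (fun u hu => (G.degree_pos_iff_exists_adj u).2 ⟨v, ((G.mem_neighborFinset v u).1 hu).symm⟩)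
    (Finset.card_pos.1 (by rwa [card_neighborFinset_eq_degree, pos_iff_ne_zero]))
  obtain ⟨k, rfl⟩ := exists_intCast_eq_of_isIntegral_of_mul_eq hℓ (a := m) (b := G.degree v)
    (by exact_mod_cast hv) (by exact_mod_cast hdeg)
  have hk : 0 < k := by
    have hkm : k * G.degree v = m := by exact_mod_cast hdeg
    refine (mul_pos_iff_of_pos_right (b := (G.degree v : ℤ)) (by omega)).1 ?_
    rw [hkm]
    exact_mod_cast hm
  refine ⟨k.toNat, by omega, ?_⟩
  rwa [← Int.cast_natCast, Int.toNat_of_nonneg hk.le]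

end SimpleGraph

theorem harmonic_iff_main_eigenvalues (H : SimpleGraph V) [DecidableRel H.Adj]
    (lam1 : ℝ) (h1 : IsGreatest {μ | H.IsEigenvalue μ} lam1) :
    H.IsHarmonic ↔ ∀ μ, H.IsMainEigenvalue μ → μ = 0 ∨ μ = lam1 := by
  have hS := H.isSymm_adjMatrix (α := ℝ)
  have hd := H.adjMatrix_mulVec_one (R := ℝ)
  obtain ⟨z, hz₀, hz⟩ := h1.1
  constructor
  · rintro ⟨ℓ, hℓ, hAd⟩ μ ⟨x, hx₀, hx, hsum⟩
    rw [← hd] at hAd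
    obtain rfl | rfl := hS.eq_zero_or_eq_of_mulVec_mulVec_one_eq_smul hAd hx hsum
    · exact Or.inl rfl
    have hle : (ℓ : ℝ) ≤ lam1 := h1.2 ⟨x, hx₀, hx⟩
    have hA₀ : ∀ v w, 0 ≤ H.adjMatrix ℝ v w := fun v w => by
      by_cases h : H.Adj v w <;> simp [h]
    have hlam : 0 < lam1 := (Nat.cast_pos.2 hℓ).trans_le hle
    exact Or.inr (le_antisymm hle ((le_abs_self _).trans
      (hS.abs_le_of_mulVec_mulVec_one_eq_smul hA₀ hAd hz₀ hz hlam.ne')))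
  · intro hmain
    have hAd := (isHermitian_iff_isSymm.2 hS).mulVec_mulVec_one_eq_smul
      fun μ x hx₀ hx hsum => hmain μ ⟨x, hx₀, hx, hsum⟩
    rw [hd] at hAd
    exact SimpleGraph.isHarmonic_of_mulVec_degree_eq_smul
      ((H.adjMatrix ℤ).isIntegral_of_map_mulVec_eq_smul hz₀ (by rwa [H.map_adjMatrix_int])) hAd
end

section
/- Let G be a connected bipartite graph of order n. Then λ₁(Ḡ) = −1 − λₙ(G) if and only if G is a balanced complete bipartite graph K_{r,r} (so n = 2r). -/
open Matrix Finset Polynomial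

variable {V : Type*} [Fintype V] [DecidableEq V]

/-!
Let `x` be an eigenvector of `G` for `λₙ`. Since `A(Ḡ) = J - I - A(G)`,
`xᵀ A(Ḡ) x = (∑ x)² + (-1 - λₙ) ‖x‖²`, and `A(Ḡ)` has nonnegative entries, so
`xᵀ A(Ḡ) x ≤ |x|ᵀ A(Ḡ) |x| ≤ λ₁(Ḡ) ‖x‖²`. If `λ₁(Ḡ) = -1 - λₙ`, both inequalities are
equalities: `∑ x = 0`, and `x`, `|x|` are both `λ₁(Ḡ)`-eigenvectors of `Ḡ`. The nonnegative
eigenvector `|x| + x` vanishes exactly where `x ≤ 0`, hence so do its `Ḡ`-neighbours, i.e.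
every vertex with `x > 0` is joined in `G` to every vertex with `x ≤ 0`. As `G` is triangle
free, `G = K_{a,b}` for this cut; then `λₙ² = ab` while `-λₙ = λ₁(Ḡ) + 1 ≥ max(a, b)`,
forcing `a = b`. Conversely, for `K_{r,r}` the vectors `±1` on the two sides and the indicator
of one side attain `-r` and `r - 1`, and Gershgorin's theorem bounds `|λ|` by the degrees
`r` of `G` and `r - 1` of `Ḡ`.
-/

namespace Matrix

variable {n : Type*} [Fintype n] {A : Matrix n n ℝ}

theorem dotProduct_mulVec_le_abs (hA : ∀ i j, 0 ≤ A i j) (x : n → ℝ) :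
    x ⬝ᵥ A *ᵥ x ≤ |x| ⬝ᵥ A *ᵥ |x| := by
  simp only [dotProduct, mulVec, Finset.mul_sum, Pi.abs_apply]
  refine Finset.sum_le_sum fun i _ => Finset.sum_le_sum fun j _ => ?_
  calc x i * (A i j * x j) = A i j * (x i * x j) := by ring
    _ ≤ A i j * (|x i| * |x j|) :=
        mul_le_mul_of_nonneg_left ((le_abs_self _).trans (abs_mul _ _).le) (hA i j)
    _ = |x i| * (A i j * |x j|) := by ring

variable [DecidableEq n] {m : ℝ}

theorem IsHermitian.posSemidef_smul_one_sub (hA : A.IsHermitian)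
    (hm : ∀ (μ : ℝ) (x : n → ℝ), x ≠ 0 → A *ᵥ x = μ • x → μ ≤ m) :
    (m • (1 : Matrix n n ℝ) - A).PosSemidef := by
  have hB : (m • (1 : Matrix n n ℝ) - A).IsHermitian :=
    (isHermitian_one.smul (IsSelfAdjoint.all m)).sub hA
  refine hB.posSemidef_iff_eigenvalues_nonneg.2 fun i => ?_
  have h := hB.mulVec_eigenvectorBasis i
  rw [sub_mulVec, smul_mulVec, one_mulVec] at h
  set x : n → ℝ := ⇑(hB.eigenvectorBasis i)
  have hx0 : x ≠ 0 := fun h0 =>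
    hB.eigenvectorBasis.orthonormal.ne_zero i (by ext v; exact congrFun h0 v)
  have hAx : A *ᵥ x = (m - hB.eigenvalues i) • x := by
    rw [sub_smul, ← h]; abel
  simpa using hm _ x hx0 hAx

theorem IsHermitian.dotProduct_mulVec_le (hA : A.IsHermitian)
    (hm : ∀ (μ : ℝ) (x : n → ℝ), x ≠ 0 → A *ᵥ x = μ • x → μ ≤ m) (x : n → ℝ) :
    x ⬝ᵥ A *ᵥ x ≤ m * (x ⬝ᵥ x) := by
  have h := (hA.posSemidef_smul_one_sub hm).dotProduct_mulVec_nonneg x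
  simp only [star_trivial, sub_mulVec, smul_mulVec, one_mulVec, dotProduct_sub, dotProduct_smul,
    smul_eq_mul] at h
  linarith

theorem IsHermitian.mulVec_eq_smul_of_dotProduct_mulVec_eq (hA : A.IsHermitian)
    (hm : ∀ (μ : ℝ) (x : n → ℝ), x ≠ 0 → A *ᵥ x = μ • x → μ ≤ m) {x : n → ℝ}
    (h : x ⬝ᵥ A *ᵥ x = m * (x ⬝ᵥ x)) : A *ᵥ x = m • x := by
  have h0 := ((hA.posSemidef_smul_one_sub hm).dotProduct_mulVec_zero_iff x).1 (by
    simp only [star_trivial, sub_mulVec, smul_mulVec, one_mulVec, dotProduct_sub, dotProduct_smul,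
      smul_eq_mul, h, sub_self])
  rw [sub_mulVec, smul_mulVec, one_mulVec, sub_eq_zero] at h0
  exact h0.symm

end Matrix

namespace SimpleGraph

section

variable (G : SimpleGraph V) [DecidableRel G.Adj]

theorem compl_adjMatrix_mulVec (x : V → ℝ) :
    Gᶜ.adjMatrix ℝ *ᵥ x = (fun _ => ∑ v, x v) - x - G.adjMatrix ℝ *ᵥ x := by
  have h := G.one_add_adjMatrix_add_compl_adjMatrix_eq_of_one (α := ℝ)
  rw [compl_adjMatrix_eq_adjMatrix_compl] at h
  rw [show Gᶜ.adjMatrix ℝ = of 1 - 1 - G.adjMatrix ℝ by rw [← h]; abel]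
  rw [sub_mulVec, sub_mulVec, one_mulVec]
  congr 2
  ext v
  simp [mulVec, dotProduct]

variable {G}

theorem IsEigenvalue.abs_le_of_forall_degree_le {μ : ℝ} (hμ : G.IsEigenvalue μ) {d : ℕ}
    (hd : ∀ v, G.degree v ≤ d) : |μ| ≤ d := by
  obtain ⟨x, hx0, hx⟩ := hμ
  have hμ' : Module.End.HasEigenvalue (toLin' (G.adjMatrix ℝ)) μ :=
    Module.End.hasEigenvalue_of_hasEigenvector ⟨Module.End.mem_eigenspace_iff.2 hx, hx0⟩
  obtain ⟨k, hk⟩ := eigenvalue_mem_ball hμ'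
  rw [Metric.mem_closedBall, Real.dist_eq] at hk
  simp only [adjMatrix_apply, SimpleGraph.irrefl, ↓reduceIte, sub_zero, Real.norm_eq_abs,
    mem_univ, sum_erase_eq_sub, abs_zero, apply_ite abs, abs_one, ← G.degree_eq_sum_if_adj] at hk
  exact hk.trans (by exact_mod_cast hd k)

omit [DecidableEq V] in
theorem eigenvector_eq_zero_of_adj {μ : ℝ} {y : V → ℝ} (hy : 0 ≤ y)
    (hAy : G.adjMatrix ℝ *ᵥ y = μ • y) {u v : V} (hv : y v = 0) (huv : G.Adj v u) : y u = 0 := by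
  have h := congrFun hAy v
  rw [adjMatrix_mulVec_apply, Pi.smul_apply, hv, smul_zero] at h
  exact (Finset.sum_eq_zero_iff_of_nonneg fun w _ => hy w).1 h u ((mem_neighborFinset _ _ _).2 huv)

theorem sum_eq_zero_and_compl_mulVec_abs_eq {μ : ℝ} {x : V → ℝ}
    (hx : G.adjMatrix ℝ *ᵥ x = μ • x) (hm : ∀ ν, Gᶜ.IsEigenvalue ν → ν ≤ -1 - μ) :
    ∑ v, x v = 0 ∧ Gᶜ.adjMatrix ℝ *ᵥ |x| = (-1 - μ) • |x| := by
  have hA := Gᶜ.isHermitian_adjMatrix ℝ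
  have hm' : ∀ (ν : ℝ) (y : V → ℝ), y ≠ 0 → Gᶜ.adjMatrix ℝ *ᵥ y = ν • y → ν ≤ -1 - μ :=
    fun ν y hy h => hm ν ⟨y, hy, h⟩
  have hxx : x ⬝ᵥ Gᶜ.adjMatrix ℝ *ᵥ x = (∑ v, x v) ^ 2 + (-1 - μ) * (x ⬝ᵥ x) := by
    rw [compl_adjMatrix_mulVec, hx]
    simp only [dotProduct, Pi.sub_apply, Pi.smul_apply, smul_eq_mul]
    rw [sq, sum_mul, mul_sum, ← sum_add_distrib]
    exact sum_congr rfl fun v _ => by ring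
  have habs : |x| ⬝ᵥ |x| = x ⬝ᵥ x := by
    simp only [dotProduct, Pi.abs_apply, abs_mul_abs_self]
  have hle := dotProduct_mulVec_le_abs (A := Gᶜ.adjMatrix ℝ)
    (fun i j => by rw [adjMatrix_apply]; positivity) x
  have hray := hA.dotProduct_mulVec_le hm' |x|
  rw [habs] at hray
  have hsum : (∑ v, x v) ^ 2 = 0 := le_antisymm (by linarith) (sq_nonneg _)
  refine ⟨pow_eq_zero_iff two_ne_zero |>.1 hsum, hA.mulVec_eq_smul_of_dotProduct_mulVec_eq hm' ?_⟩
  rw [habs]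
  linarith

end

def IsCompleteBipartiteWithPart (G : SimpleGraph V) (S : Finset V) : Prop :=
  ∀ u v, G.Adj u v ↔ (u ∈ S ↔ v ∉ S)

namespace IsCompleteBipartiteWithPart

variable {G : SimpleGraph V} {S : Finset V}

theorem compl (hS : G.IsCompleteBipartiteWithPart S) : G.IsCompleteBipartiteWithPart Sᶜ :=
  fun u v => by rw [hS u v, mem_compl, mem_compl]; tauto

variable [DecidableRel G.Adj]

theorem neighborFinset_eq (hS : G.IsCompleteBipartiteWithPart S) {v : V} (hv : v ∈ S) :
    G.neighborFinset v = Sᶜ := by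
  ext u
  simp [hS v u, hv]

theorem degree_eq (hS : G.IsCompleteBipartiteWithPart S) (hcard : #Sᶜ = #S) (v : V) :
    G.degree v = #S := by
  by_cases hv : v ∈ S
  · rw [← card_neighborFinset_eq_degree, hS.neighborFinset_eq hv, hcard]
  · rw [← card_neighborFinset_eq_degree, hS.compl.neighborFinset_eq (mem_compl.2 hv),
      compl_compl]

theorem mulVec_apply (hS : G.IsCompleteBipartiteWithPart S) (x : V → ℝ) {v : V} (hv : v ∈ S) :
    (G.adjMatrix ℝ *ᵥ x) v = ∑ u ∈ Sᶜ, x u := by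
  rw [adjMatrix_mulVec_apply, hS.neighborFinset_eq hv]

theorem mul_sum_eq (hS : G.IsCompleteBipartiteWithPart S) {μ : ℝ} {x : V → ℝ}
    (hx : G.adjMatrix ℝ *ᵥ x = μ • x) : μ * ∑ v ∈ S, x v = #S * ∑ v ∈ Sᶜ, x v := by
  calc μ * ∑ v ∈ S, x v = ∑ v ∈ S, (G.adjMatrix ℝ *ᵥ x) v := by
        simp only [hx, Pi.smul_apply, smul_eq_mul, mul_sum]
    _ = #S * ∑ v ∈ Sᶜ, x v := by
      rw [sum_congr rfl fun v hv => hS.mulVec_apply x hv, sum_const, nsmul_eq_mul]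

theorem sq_eq_card_mul_card (hS : G.IsCompleteBipartiteWithPart S) {μ : ℝ}
    (hμ : G.IsEigenvalue μ) (hμ0 : μ ≠ 0) : μ ^ 2 = #S * #Sᶜ := by
  obtain ⟨x, hx0, hx⟩ := hμ
  have h1 := hS.mul_sum_eq hx
  have h2 := hS.compl.mul_sum_eq hx
  rw [compl_compl] at h2
  by_contra hne
  have hne' : μ ^ 2 - #S * #Sᶜ ≠ 0 := sub_ne_zero.2 hne
  have hS0 : ∑ v ∈ S, x v = 0 := (mul_eq_zero.1 (by
    linear_combination μ * h1 + (#S : ℝ) * h2 :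
      (μ ^ 2 - #S * #Sᶜ) * ∑ v ∈ S, x v = 0)).resolve_left hne'
  have hSc0 : ∑ v ∈ Sᶜ, x v = 0 := (mul_eq_zero.1 (by
    linear_combination μ * h2 + (#Sᶜ : ℝ) * h1 :
      (μ ^ 2 - #S * #Sᶜ) * ∑ v ∈ Sᶜ, x v = 0)).resolve_left hne'
  refine hx0 (funext fun v => (mul_eq_zero.1 ?_).resolve_left hμ0)
  rw [← smul_eq_mul, ← Pi.smul_apply, ← hx]
  by_cases hv : v ∈ S
  · rw [hS.mulVec_apply x hv, hSc0]
  · rw [hS.compl.mulVec_apply x (mem_compl.2 hv), compl_compl, hS0]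

theorem isEigenvalue_neg_card (hS : G.IsCompleteBipartiteWithPart S) (hne : S.Nonempty)
    (hcard : #Sᶜ = #S) : G.IsEigenvalue (-#S) := by
  refine ⟨fun v => if v ∈ S then 1 else -1, fun h => ?_, ?_⟩
  · obtain ⟨v, hv⟩ := hne
    simpa [hv] using congrFun h v
  · ext v
    by_cases hv : v ∈ S
    · rw [hS.mulVec_apply _ hv, sum_ite_of_false fun u hu => mem_compl.1 hu]
      simp [hv, hcard]
    · rw [hS.compl.mulVec_apply _ (mem_compl.2 hv), compl_compl, sum_ite_of_true fun u hu => hu]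
      simp [hv]

theorem isEigenvalue_compl_card_sub_one (hS : G.IsCompleteBipartiteWithPart S)
    (hne : S.Nonempty) : Gᶜ.IsEigenvalue (#S - 1) := by
  refine ⟨fun v => if v ∈ S then 1 else 0, fun h => ?_, ?_⟩
  · obtain ⟨v, hv⟩ := hne
    simpa [hv] using congrFun h v
  · ext v
    rw [compl_adjMatrix_mulVec, Pi.sub_apply, Pi.sub_apply]
    by_cases hv : v ∈ S
    · simp [hS.mulVec_apply _ hv, hv, inter_comm, inter_compl]
    · simp [hS.compl.mulVec_apply _ (mem_compl.2 hv), hv]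

theorem isLeast_eigenvalue (hS : G.IsCompleteBipartiteWithPart S) (hne : S.Nonempty)
    (hcard : #Sᶜ = #S) : IsLeast {μ | G.IsEigenvalue μ} (-#S) :=
  ⟨hS.isEigenvalue_neg_card hne hcard, fun _ hμ =>
    neg_le_of_abs_le (hμ.abs_le_of_forall_degree_le fun v => (hS.degree_eq hcard v).le)⟩

theorem isGreatest_compl_eigenvalue (hS : G.IsCompleteBipartiteWithPart S) (hne : S.Nonempty)
    (hcard : #Sᶜ = #S) : IsGreatest {μ | Gᶜ.IsEigenvalue μ} (#S - 1) := by
  refine ⟨hS.isEigenvalue_compl_card_sub_one hne, fun μ hμ => ?_⟩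
  have hdeg : ∀ v, Gᶜ.degree v ≤ #S - 1 := fun v => by
    rw [degree_compl, hS.degree_eq hcard, ← card_add_card_compl S, hcard]
    omega
  have h := (le_abs_self μ).trans (hμ.abs_le_of_forall_degree_le hdeg)
  rwa [Nat.cast_sub hne.card_pos, Nat.cast_one] at h

end IsCompleteBipartiteWithPart

variable {G : SimpleGraph V}

theorem isCompleteBipartiteWithPart_of_colorable_two (hbip : G.Colorable 2) {S : Finset V}
    (hne : S.Nonempty) (hne' : Sᶜ.Nonempty) (hadj : ∀ u ∈ S, ∀ v ∉ S, G.Adj u v) :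
    G.IsCompleteBipartiteWithPart S := by
  have hadj' : ∀ u v, (u ∈ S ↔ v ∉ S) → G.Adj u v := fun u v huv => by
    by_cases hu : u ∈ S
    · exact hadj u hu v (huv.1 hu)
    · exact (hadj v (by tauto) u hu).symm
  refine fun u v => ⟨fun h => ?_, hadj' u v⟩
  by_contra huv
  obtain ⟨w, hw⟩ : ∃ w, u ∈ S ↔ w ∉ S := by
    by_cases hu : u ∈ S
    · exact hne'.imp fun w hw => by simpa [hu] using hw
    · exact hne.imp fun w hw => by simpa [hu] using hw
  exact hbip.cliqueFree (by norm_num) {u, v, w}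
    (is3Clique_triple_iff.2 ⟨h, hadj' u w hw, hadj' v w (by tauto)⟩)

theorem nonempty_iso_completeBipartiteGraph_iff {α β : Type*} [Fintype α] [Fintype β] :
    Nonempty (G ≃g completeBipartiteGraph α β) ↔
      ∃ S : Finset V, #S = Fintype.card α ∧ #Sᶜ = Fintype.card β ∧
        G.IsCompleteBipartiteWithPart S := by
  constructor
  · rintro ⟨e⟩
    have hS : #(univ.filter fun v => (e v).isLeft) = Fintype.card α := by
      rw [← Fintype.card_subtype, ← Fintype.card_congr (Equiv.sumIsLeft (α := α) (β := β))]
      exact Fintype.card_congr (e.toEquiv.subtypeEquiv fun _ => Iff.rfl)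
    refine ⟨univ.filter fun v => (e v).isLeft, hS, ?_, fun u v => ?_⟩
    · rw [card_compl, hS, Fintype.card_congr e.toEquiv, Fintype.card_sum]
      omega
    · simp only [← e.map_adj_iff, mem_filter, mem_univ, true_and]
      generalize e u = a
      generalize e v = b
      cases a <;> cases b <;> simp
  · rintro ⟨S, hα, hβ, hS⟩
    have eα : S ≃ α := Fintype.equivOfCardEq (by rw [Fintype.card_coe, hα])
    have eβ : {v // v ∉ S} ≃ β := Fintype.equivOfCardEq (by
      rw [← hβ, ← Fintype.card_coe,
        Fintype.card_congr (Equiv.subtypeEquivRight fun v => mem_compl)])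
    refine ⟨⟨(Equiv.sumCompl (· ∈ S)).symm.trans (eα.sumCongr eβ), fun {u v} => ?_⟩⟩
    by_cases hu : u ∈ S <;> by_cases hv : v ∈ S <;>
      simp [Equiv.sumCompl_symm_apply_of_pos, Equiv.sumCompl_symm_apply_of_neg, hu, hv, hS u v]

variable [DecidableRel G.Adj]

theorem exists_isCompleteBipartiteWithPart (hbip : G.Colorable 2) {μ : ℝ}
    (hμ : G.IsEigenvalue μ) (hm : ∀ ν, Gᶜ.IsEigenvalue ν → ν ≤ -1 - μ) :
    ∃ S : Finset V, S.Nonempty ∧ Sᶜ.Nonempty ∧ G.IsCompleteBipartiteWithPart S := by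
  obtain ⟨x, hx0, hx⟩ := hμ
  obtain ⟨hsum, habs⟩ := sum_eq_zero_and_compl_mulVec_abs_eq hx hm
  have hcompl : Gᶜ.adjMatrix ℝ *ᵥ x = (-1 - μ) • x := by
    rw [compl_adjMatrix_mulVec, hx, hsum]
    ext v
    simp only [Pi.sub_apply, Pi.smul_apply, smul_eq_mul]
    ring
  have hy : Gᶜ.adjMatrix ℝ *ᵥ (|x| + x) = (-1 - μ) • (|x| + x) := by
    rw [mulVec_add, habs, hcompl, smul_add]
  have hy0 : 0 ≤ |x| + x := fun v => neg_le_iff_add_nonneg.1 (neg_le_abs (x v))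
  obtain ⟨v₀, hv₀⟩ := Function.ne_iff.1 hx0
  obtain ⟨u, -, hu⟩ := exists_pos_of_sum_zero_of_exists_nonzero x hsum ⟨v₀, mem_univ _, hv₀⟩
  obtain ⟨w, -, hw⟩ := exists_pos_of_sum_zero_of_exists_nonzero (-x) (by simp [hsum])
    ⟨v₀, mem_univ _, by simpa using hv₀⟩
  refine ⟨univ.filter (0 < x ·), ⟨u, by simpa using hu⟩, ⟨w, by simpa using hw.le⟩,
    isCompleteBipartiteWithPart_of_colorable_two hbip ⟨u, by simpa using hu⟩
      ⟨w, by simpa using hw.le⟩ fun u hu v hv => ?_⟩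
  simp only [mem_filter, mem_univ, true_and, not_lt] at hu hv
  by_contra huv
  have hvu : Gᶜ.Adj v u := (compl_adj G v u).2 ⟨fun h => by linarith [h ▸ hu], fun h => huv h.symm⟩
  have := Gᶜ.eigenvector_eq_zero_of_adj hy0 hy (by simp [abs_of_nonpos hv]) hvu
  simp [abs_of_pos hu] at this
  linarith

theorem exists_isCompleteBipartiteWithPart_card_compl_eq (hbip : G.Colorable 2) {μ : ℝ}
    (hμ : G.IsEigenvalue μ) (hm : ∀ ν, Gᶜ.IsEigenvalue ν → ν ≤ -1 - μ) :
    ∃ S : Finset V, #Sᶜ = #S ∧ G.IsCompleteBipartiteWithPart S := by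
  obtain ⟨S, hne, hne', hS⟩ := exists_isCompleteBipartiteWithPart hbip hμ hm
  have ha := hm _ (hS.isEigenvalue_compl_card_sub_one hne)
  have hb := hm _ (hS.compl.isEigenvalue_compl_card_sub_one hne')
  have ha1 : (1 : ℝ) ≤ #S := by exact_mod_cast hne.card_pos
  have hb1 : (1 : ℝ) ≤ #Sᶜ := by exact_mod_cast hne'.card_pos
  have hsq := hS.sq_eq_card_mul_card hμ (by linarith)
  refine ⟨S, ?_, hS⟩
  exact_mod_cast (show (#Sᶜ : ℝ) = #S by nlinarith)

end SimpleGraph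

theorem bipartite_compl_index_iff_balanced_complete_general (G : SimpleGraph V)
    [DecidableRel G.Adj] (hbip : G.Colorable 2)
    (lamn mu1 : ℝ)
    (hmin : IsLeast {μ | G.IsEigenvalue μ} lamn)
    (hmax : IsGreatest {μ | Gᶜ.IsEigenvalue μ} mu1) :
    mu1 = -1 - lamn ↔
      ∃ r : ℕ, Fintype.card V = 2 * r ∧
        Nonempty (G ≃g completeBipartiteGraph (Fin r) (Fin r)) := by
  simp_rw [SimpleGraph.nonempty_iso_completeBipartiteGraph_iff, Fintype.card_fin]
  constructor
  · rintro rfl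
    obtain ⟨S, hcard, hS⟩ :=
      SimpleGraph.exists_isCompleteBipartiteWithPart_card_compl_eq hbip hmin.1 hmax.2
    exact ⟨#S, by rw [← card_add_card_compl S, hcard, two_mul], S, rfl, hcard, hS⟩
  · rintro ⟨r, hV, S, hSr, hScr, hS⟩
    obtain ⟨x, hx0, -⟩ := hmin.1
    obtain ⟨v, -⟩ := Function.ne_iff.1 hx0
    have hne : S.Nonempty := card_pos.1 (by have := Fintype.card_pos_iff.2 ⟨v⟩; omega)
    rw [← (hS.isLeast_eigenvalue hne (hScr.trans hSr.symm)).unique hmin,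
      ← (hS.isGreatest_compl_eigenvalue hne (hScr.trans hSr.symm)).unique hmax]
    ring

theorem bipartite_compl_index_iff_balanced_complete (G : SimpleGraph V)
    [DecidableRel G.Adj] (hconn : G.Connected) (hbip : G.Colorable 2)
    (lamn mu1 : ℝ)
    (hmin : IsLeast {μ | G.IsEigenvalue μ} lamn)
    (hmax : IsGreatest {μ | Gᶜ.IsEigenvalue μ} mu1) :
    mu1 = -1 - lamn ↔
      ∃ r : ℕ, Fintype.card V = 2 * r ∧
        Nonempty (G ≃g completeBipartiteGraph (Fin r) (Fin r)) :=
  bipartite_compl_index_iff_balanced_complete_general G hbip lamn mu1 hmin hmax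
end

section
/- The path P_n on n vertices has exactly ⌈n/2⌉ main eigenvalues. -/
open Matrix Finset Polynomial

variable {V : Type*} [Fintype V] [DecidableEq V]

/-!
The vectors `v ↦ sin ((v + 1) k π / (n + 1))`, `1 ≤ k ≤ n`, are eigenvectors of `P_n` for the `n`
distinct eigenvalues `2 cos (k π / (n + 1))`, so these are all the eigenvalues. An eigenvector of
a path is determined by its first entry through `x (j + 2) = μ x (j + 1) - x j`, so each eigenspace
is spanned by one of these vectors. Telescoping gives, for `θ = k π / (n + 1)`,
`2 sin (θ / 2) ∑ v, sin ((v + 1) θ) = (1 - (-1) ^ k) cos (θ / 2)`,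
so the `k`-th eigenvalue is main exactly when `k` is odd.
-/

open Real

lemma Module.End.HasEigenvector.mem_range {K M ι : Type*} [Field K] [AddCommGroup M]
    [Module K M] [FiniteDimensional K M] [Fintype ι] {f : End K M} {ν : ι → K}
    (hν : Function.Injective ν) {w : ι → M} (hw : ∀ i, f.HasEigenvector (ν i) (w i))
    (hcard : Module.finrank K M ≤ Fintype.card ι) {μ : K} {x : M}
    (hx : f.HasEigenvector μ x) : μ ∈ Set.range ν := by
  by_contra hμ
  have hinj : Function.Injective (fun i : Option ι => i.elim μ ν) := by
    rintro (_ | i) (_ | j) h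
    · rfl
    · exact absurd ⟨j, h.symm⟩ hμ
    · exact absurd ⟨i, h⟩ hμ
    · exact congrArg some (hν h)
  have hli := eigenvectors_linearIndependent' f _ hinj (fun i => i.elim x w)
    (by rintro (_ | i); exacts [hx, hw i])
  have := hli.fintype_card_le_finrank
  rw [Fintype.card_option] at this
  omega

lemma Real.two_mul_sin_half_mul_sum_sin (θ : ℝ) (n : ℕ) :
    2 * sin (θ / 2) * ∑ j ∈ range n, sin ((j + 1) * θ)
      = cos (θ / 2) - cos ((2 * n + 1) * θ / 2) := by
  induction n with
  | zero => simp
  | succ n ih =>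
    rw [sum_range_succ, mul_add, ih]
    have h1 : (2 * n + 1) * θ / 2 = (n + 1) * θ - θ / 2 := by ring
    have h2 : (2 * ((n + 1 : ℕ) : ℝ) + 1) * θ / 2 = (n + 1) * θ + θ / 2 := by push_cast; ring
    rw [h1, h2, cos_sub, cos_add]
    ring

lemma Nat.card_filter_odd_Icc_one (n : ℕ) : #{k ∈ Icc 1 n | Odd k} = (n + 1) / 2 := by
  have : {k ∈ Icc 1 n | Odd k} = (range ((n + 1) / 2)).image (fun j => 2 * j + 1) := by
    ext k
    simp only [mem_filter, mem_Icc, mem_image, mem_range, Nat.odd_iff]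
    constructor
    · rintro ⟨⟨hk, hkn⟩, hodd⟩
      exact ⟨k / 2, by omega, by omega⟩
    · rintro ⟨j, hj, rfl⟩
      omega
  rw [this, Finset.card_image_of_injective _ fun _ _ h => by omega, card_range]

namespace SimpleGraph

/-- `x` read as the sequence `0, x 0, …, x (n - 1), 0, 0, …`: the neighbours of vertex `v` of
`pathGraph n` sit at positions `v` and `v + 2`. -/
def zeroPad {α : Type*} [Zero α] {n : ℕ} (x : Fin n → α) : ℕ → α
  | 0 => 0
  | j + 1 => if h : j < n then x ⟨j, h⟩ else 0

variable {α : Type*} {n : ℕ}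

@[simp] lemma zeroPad_zero [Zero α] (x : Fin n → α) : zeroPad x 0 = 0 := rfl

lemma zeroPad_succ [Zero α] (x : Fin n → α) {j : ℕ} (hj : j < n) :
    zeroPad x (j + 1) = x ⟨j, hj⟩ := dif_pos hj

lemma zeroPad_of_lt [Zero α] (x : Fin n → α) {j : ℕ} (hj : n < j) : zeroPad x j = 0 := by
  obtain ⟨i, rfl⟩ : ∃ i, j = i + 1 := ⟨j - 1, by omega⟩
  exact dif_neg (by omega)

lemma sum_ite_val_eq [AddCommMonoid α] (x : Fin n → α) (m : ℕ) :
    ∑ w : Fin n, (if w.val = m then x w else 0) = zeroPad x (m + 1) := by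
  by_cases hm : m < n
  · simp only [← Fin.ext_iff (b := ⟨m, hm⟩), Fintype.sum_ite_eq', zeroPad_succ x hm]
  · rw [zeroPad_of_lt x (by omega)]
    exact Finset.sum_eq_zero fun w _ => if_neg (by omega)

lemma pathGraph_adjMatrix_mulVec_apply [NonAssocSemiring α] [DecidableRel (pathGraph n).Adj]
    (x : Fin n → α) (v : Fin n) :
    ((pathGraph n).adjMatrix α *ᵥ x) v = zeroPad x v + zeroPad x (v + 2) := by
  have hsplit : ∀ w : Fin n, (pathGraph n).adjMatrix α v w * x w =
      (if w.val + 1 = v.val then x w else 0) + (if w.val = v.val + 1 then x w else 0) := by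
    intro w
    simp only [adjMatrix_apply, pathGraph_adj]
    split_ifs <;> first | omega | simp
  simp only [mulVec, dotProduct, hsplit, sum_add_distrib, sum_ite_val_eq]
  congr 1
  obtain ⟨v, hv⟩ := v
  cases v with
  | zero => exact Finset.sum_eq_zero fun w _ => if_neg (Nat.succ_ne_zero _)
  | succ m => simp only [Nat.add_right_cancel_iff, sum_ite_val_eq]

lemma zeroPad_add_two [DecidableRel (pathGraph n).Adj] {μ : ℝ} {x : Fin n → ℝ}
    (hx : (pathGraph n).adjMatrix ℝ *ᵥ x = μ • x) {j : ℕ} (hj : j < n) :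
    zeroPad x (j + 2) = μ * zeroPad x (j + 1) - zeroPad x j := by
  have := congrFun hx ⟨j, hj⟩
  rw [pathGraph_adjMatrix_mulVec_apply, Pi.smul_apply, smul_eq_mul] at this
  rw [zeroPad_succ x hj]
  linarith

lemma pathGraph_eigenvector_eq_zero_of_head [DecidableRel (pathGraph n).Adj] {μ : ℝ}
    {x : Fin n → ℝ} (hx : (pathGraph n).adjMatrix ℝ *ᵥ x = μ • x) (hn : 0 < n)
    (hx0 : x ⟨0, hn⟩ = 0) : x = 0 := by
  have hpad : ∀ j, zeroPad x j = 0 := by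
    intro j
    induction j using Nat.twoStepInduction with
    | zero => rfl
    | one => rwa [zeroPad_succ x hn]
    | more j ih₀ ih₁ =>
      rcases Nat.lt_or_ge j n with hj | hj
      · rw [zeroPad_add_two hx hj, ih₀, ih₁, mul_zero, sub_zero]
      · exact zeroPad_of_lt x (by omega)
  ext ⟨v, hv⟩
  rw [← zeroPad_succ x hv, hpad, Pi.zero_apply]

lemma pathGraph_eigenvector_smul_head_eq [DecidableRel (pathGraph n).Adj] {μ : ℝ}
    {x z : Fin n → ℝ} (hx : (pathGraph n).adjMatrix ℝ *ᵥ x = μ • x)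
    (hz : (pathGraph n).adjMatrix ℝ *ᵥ z = μ • z) (hn : 0 < n) :
    z ⟨0, hn⟩ • x = x ⟨0, hn⟩ • z := by
  rw [← sub_eq_zero]
  refine pathGraph_eigenvector_eq_zero_of_head (μ := μ) ?_ hn ?_
  · rw [mulVec_sub, mulVec_smul, mulVec_smul, hx, hz, smul_sub, smul_comm μ, smul_comm μ]
  · simp [mul_comm]

noncomputable def pathEigenvalue (n k : ℕ) : ℝ := 2 * cos (k * π / (n + 1))

noncomputable def pathEigenvector (n k : ℕ) : Fin n → ℝ :=
  fun v => sin ((v + 1) * (k * π / (n + 1)))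

lemma pathAngle_mem_Ioo {k : ℕ} (hk : 1 ≤ k) (hkn : k ≤ n) :
    k * π / (n + 1) ∈ Set.Ioo 0 π := by
  have hk' : (1 : ℝ) ≤ k := by exact_mod_cast hk
  have hkn' : (k : ℝ) ≤ n := by exact_mod_cast hkn
  refine ⟨by positivity, ?_⟩
  rw [div_lt_iff₀ (by positivity)]
  nlinarith [pi_pos]

lemma pathEigenvalue_injOn : Set.InjOn (pathEigenvalue n) (Set.Icc 1 n) := by
  intro k ⟨hk, hkn⟩ l ⟨hl, hln⟩ h
  have := injOn_cos (Set.Ioo_subset_Icc_self (pathAngle_mem_Ioo hk hkn))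
    (Set.Ioo_subset_Icc_self (pathAngle_mem_Ioo hl hln)) (by simpa [pathEigenvalue] using h)
  rw [div_left_inj' (by positivity), mul_left_inj' pi_ne_zero] at this
  exact_mod_cast this

lemma zeroPad_pathEigenvector (k : ℕ) {j : ℕ} (hj : j ≤ n + 1) :
    zeroPad (pathEigenvector n k) j = sin (j * (k * π / (n + 1))) := by
  rcases Nat.lt_or_ge n j with hnj | hjn
  · obtain rfl : j = n + 1 := by omega
    rw [zeroPad_of_lt _ hnj]
    push_cast
    rw [mul_div_cancel₀ _ (by positivity), sin_nat_mul_pi]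
  · cases j with
    | zero => simp
    | succ i => simp [zeroPad_succ _ (show i < n by omega), pathEigenvector]

lemma pathGraph_adjMatrix_mulVec_pathEigenvector [DecidableRel (pathGraph n).Adj] (k : ℕ) :
    (pathGraph n).adjMatrix ℝ *ᵥ pathEigenvector n k
      = pathEigenvalue n k • pathEigenvector n k := by
  ext v
  rw [pathGraph_adjMatrix_mulVec_apply, zeroPad_pathEigenvector _ (by omega),
    zeroPad_pathEigenvector _ (by omega)]
  simp only [Pi.smul_apply, smul_eq_mul, pathEigenvalue, pathEigenvector]
  set θ := (k : ℝ) * π / (n + 1)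
  have h1 : ((v : ℕ) : ℝ) * θ = (v + 1) * θ - θ := by ring
  have h2 : (((v : ℕ) + 2 : ℕ) : ℝ) * θ = (v + 1) * θ + θ := by push_cast; ring
  rw [h1, h2, sin_sub, sin_add]
  ring

lemma pathEigenvector_apply_zero_pos {k : ℕ} (hk : 1 ≤ k) (hkn : k ≤ n) :
    0 < pathEigenvector n k ⟨0, by omega⟩ := by
  obtain ⟨h0, hπ⟩ := pathAngle_mem_Ioo hk hkn
  simpa [pathEigenvector] using sin_pos_of_pos_of_lt_pi h0 hπ

lemma sum_pathEigenvector_eq_zero_iff {k : ℕ} (hk : 1 ≤ k) (hkn : k ≤ n) :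
    ∑ v, pathEigenvector n k v = 0 ↔ Even k := by
  set θ := (k : ℝ) * π / (n + 1)
  obtain ⟨hθ0, hθπ⟩ := pathAngle_mem_Ioo hk hkn
  have hsin : 0 < sin (θ / 2) := sin_pos_of_pos_of_lt_pi (by linarith) (by linarith)
  have hcos : 0 < cos (θ / 2) := cos_pos_of_mem_Ioo ⟨by linarith, by linarith⟩
  have hend : (2 * n + 1) * θ / 2 = k * π - θ / 2 := by
    simp only [θ]; field_simp; ring
  have key := two_mul_sin_half_mul_sum_sin θ n
  rw [hend, cos_nat_mul_pi_sub, ← Fin.sum_univ_eq_sum_range (fun j => sin ((j + 1) * θ))] at key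
  change 2 * sin (θ / 2) * ∑ v, pathEigenvector n k v = _ at key
  rcases Nat.even_or_odd k with he | ho
  · simp only [he, iff_true]
    rw [he.neg_one_pow] at key
    simpa [hsin.ne'] using key
  · simp only [Nat.not_even_iff_odd.mpr ho, iff_false]
    rw [ho.neg_one_pow] at key
    intro h
    rw [h] at key
    linarith

lemma pathGraph_eigenvalue_mem [DecidableRel (pathGraph n).Adj] {μ : ℝ} {x : Fin n → ℝ}
    (hx0 : x ≠ 0) (hx : (pathGraph n).adjMatrix ℝ *ᵥ x = μ • x) :
    ∃ k, 1 ≤ k ∧ k ≤ n ∧ μ = pathEigenvalue n k := by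
  have hvec : ∀ {ν : ℝ} {y : Fin n → ℝ}, y ≠ 0 → (pathGraph n).adjMatrix ℝ *ᵥ y = ν • y →
      Module.End.HasEigenvector (toLin' ((pathGraph n).adjMatrix ℝ)) ν y := fun hy0 hy =>
    ⟨Module.End.mem_eigenspace_iff.mpr (by rwa [toLin'_apply]), hy0⟩
  have hinj : Function.Injective fun i : Fin n => pathEigenvalue n (i + 1) := fun i j h =>
    Fin.ext <| Nat.succ_injective <|
      pathEigenvalue_injOn ⟨by omega, i.isLt⟩ ⟨by omega, j.isLt⟩ h
  obtain ⟨i, hi⟩ := Module.End.HasEigenvector.mem_range hinj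
    (fun i => hvec (fun h => (pathEigenvector_apply_zero_pos (by omega) i.isLt).ne'
        (congrFun h _)) (pathGraph_adjMatrix_mulVec_pathEigenvector _))
    (by simp) (hvec hx0 hx)
  exact ⟨i + 1, by omega, i.isLt, hi.symm⟩

lemma setOf_isMainEigenvalue_pathGraph [DecidableRel (pathGraph n).Adj] :
    {μ | (pathGraph n).IsMainEigenvalue μ} = pathEigenvalue n '' ↑{k ∈ Icc 1 n | Odd k} := by
  ext μ
  simp only [Set.mem_ofPred_eq, coe_filter, mem_Icc, Set.mem_image]
  constructor
  · rintro ⟨x, hx0, hx, hsum⟩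
    obtain ⟨k, hk, hkn, rfl⟩ := pathGraph_eigenvalue_mem hx0 hx
    refine ⟨k, ⟨⟨hk, hkn⟩, Nat.not_even_iff_odd.mp fun he => hsum ?_⟩, rfl⟩
    have hprop := congrArg (fun y => ∑ v, y v) <| pathGraph_eigenvector_smul_head_eq hx
      (pathGraph_adjMatrix_mulVec_pathEigenvector k) (by omega)
    simp only [Pi.smul_apply, smul_eq_mul, ← mul_sum,
      (sum_pathEigenvector_eq_zero_iff hk hkn).mpr he, mul_zero] at hprop
    exact (mul_eq_zero.mp hprop).resolve_left (pathEigenvector_apply_zero_pos hk hkn).ne'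
  · rintro ⟨k, ⟨⟨hk, hkn⟩, hodd⟩, rfl⟩
    refine ⟨pathEigenvector n k,
      fun h => (pathEigenvector_apply_zero_pos hk hkn).ne' (congrFun h _),
      pathGraph_adjMatrix_mulVec_pathEigenvector k, ?_⟩
    rw [Ne, sum_pathEigenvector_eq_zero_iff hk hkn]
    exact Nat.not_even_iff_odd.mpr hodd

end SimpleGraph

open SimpleGraph in
theorem path_main_eigenvalue_count_general {n : ℕ}
    [DecidableRel (SimpleGraph.pathGraph n).Adj] :
    {μ : ℝ | (SimpleGraph.pathGraph n).IsMainEigenvalue μ}.ncard = (n + 1) / 2 := by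
  rw [setOf_isMainEigenvalue_pathGraph, Set.InjOn.ncard_image, Set.ncard_coe_finset,
    Nat.card_filter_odd_Icc_one]
  exact pathEigenvalue_injOn.mono fun k hk => mem_Icc.mp (mem_filter.mp hk).1

theorem path_main_eigenvalue_count {n : ℕ} (hn : 2 ≤ n)
    [DecidableRel (SimpleGraph.pathGraph n).Adj] :
    {μ : ℝ | (SimpleGraph.pathGraph n).IsMainEigenvalue μ}.ncard = (n + 1) / 2 :=
  path_main_eigenvalue_count_general
end

section
/- If T = T(k,s) is a non-balanced double star (k ≠ s, k,s ≥ 1), then T has exactly four main eigenvalues, namely the four nonzero roots of x⁴ − (k+s+1)x² + ks. -/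
open Matrix Finset Polynomial

variable {V : Type*} [Fintype V] [DecidableEq V]

/-- The double star `T(k,s)`: two adjacent centers, the first with `k` pendant
vertices and the second with `s` pendant vertices. -/
def doubleStar (k s : ℕ) : SimpleGraph (Fin 2 ⊕ (Fin k ⊕ Fin s)) :=
  SimpleGraph.fromRel (fun a b =>
    match a, b with
    | Sum.inl _, Sum.inl _ => True
    | Sum.inl u, Sum.inr (Sum.inl _) => u = 0
    | Sum.inl u, Sum.inr (Sum.inr _) => u = 1
    | _, _ => False)

/-!
The partition of `T(k,s)` into the two centres and the two classes of leaves is equitable, and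
its quotient matrix has characteristic polynomial `x⁴ - (k+s+1)x² + ks`. The cell sums of an
eigenvector satisfy the transposed quotient equations, so every main eigenvalue is a root.
Conversely every root lifts to an eigenvector constant on the cells; the lifts normalised at
either centre have coordinate sums differing by `(k - s)μ²`, so for `k ≠ s` one of them is not
orthogonal to the all-ones vector. The quartic is biquadratic with discriminant
`(k - s)² + 2(k + s) + 1 > 0` in `x²`, so it has exactly four real roots, all nonzero.
-/

theorem Real.setOf_sq_eq_of_pos {y : ℝ} (hy : 0 < y) : {x : ℝ | x ^ 2 = y} = {√y, -√y} := by
  ext x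
  rw [Set.mem_ofPred_eq, Set.mem_insert_iff, Set.mem_singleton_iff, ← sq_eq_sq_iff_eq_or_eq_neg,
    Real.sq_sqrt hy.le]

theorem Real.ncard_setOf_sq_eq_of_pos {y : ℝ} (hy : 0 < y) : {x : ℝ | x ^ 2 = y}.ncard = 2 := by
  rw [Real.setOf_sq_eq_of_pos hy]
  exact Set.ncard_pair (by linarith [Real.sqrt_pos.2 hy])

/-- With `d = √(e² - 4c)`, the quartic factors as `(x² - (e + d)/2) (x² - (e - d)/2)`. -/
theorem Real.ncard_setOf_biquadratic_eq_zero {e c : ℝ} (hc : 0 < c) (hdisc : 4 * c < e ^ 2)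
    (he : 0 < e) : {x : ℝ | x ^ 4 - e * x ^ 2 + c = 0}.ncard = 4 := by
  set d := √(e ^ 2 - 4 * c)
  have hd_sq : d ^ 2 = e ^ 2 - 4 * c := Real.sq_sqrt (by linarith)
  have hd_pos : 0 < d := Real.sqrt_pos.2 (by linarith)
  have hd_lt : d < e := by nlinarith
  have hsplit : {x : ℝ | x ^ 4 - e * x ^ 2 + c = 0} =
      {x | x ^ 2 = (e + d) / 2} ∪ {x | x ^ 2 = (e - d) / 2} := by
    ext x
    simp only [Set.mem_union, Set.mem_ofPred_eq, ← sub_eq_zero (a := x ^ 2), ← mul_eq_zero]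
    constructor
    · intro h
      linear_combination h - hd_sq / 4
    · intro h
      linear_combination h + hd_sq / 4
  have hdisj : Disjoint {x : ℝ | x ^ 2 = (e + d) / 2} {x | x ^ 2 = (e - d) / 2} :=
    Set.disjoint_left.2 fun x h₁ h₂ => by
      rw [Set.mem_ofPred_eq] at h₁ h₂
      linarith
  have hplus := Real.ncard_setOf_sq_eq_of_pos (y := (e + d) / 2) (by linarith)
  have hminus := Real.ncard_setOf_sq_eq_of_pos (y := (e - d) / 2) (by linarith)
  rw [hsplit, Set.ncard_union_eq hdisj (Set.finite_of_ncard_ne_zero (by omega))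
    (Set.finite_of_ncard_ne_zero (by omega)), hplus, hminus]

theorem SimpleGraph.isMainEigenvalue_iff {V : Type*} [Fintype V] (G : SimpleGraph V)
    [DecidableRel G.Adj] (μ : ℝ) :
    G.IsMainEigenvalue μ ↔ ∃ x : V → ℝ, G.adjMatrix ℝ *ᵥ x = μ • x ∧ ∑ v, x v ≠ 0 := by
  refine ⟨fun ⟨x, _, hx, hsum⟩ => ⟨x, hx, hsum⟩, fun ⟨x, hx, hsum⟩ => ⟨x, ?_, hx, hsum⟩⟩
  rintro rfl
  simp at hsum

section DoubleStar

variable {k s : ℕ}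

/-- Value `α` at the centre `inl 0`, `β` at the centre `inl 1`, `γ` on the leaves at `inl 0` and
`δ` on the leaves at `inl 1`. -/
def doubleStarVec (α β γ δ : ℝ) : Fin 2 ⊕ (Fin k ⊕ Fin s) → ℝ :=
  Sum.elim ![α, β] (Sum.elim (fun _ => γ) (fun _ => δ))

theorem smul_doubleStarVec (μ α β γ δ : ℝ) :
    μ • doubleStarVec (k := k) (s := s) α β γ δ =
      doubleStarVec (μ * α) (μ * β) (μ * γ) (μ * δ) := by
  funext v
  rcases v with c | i | j
  · fin_cases c <;> simp [doubleStarVec]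
  · simp [doubleStarVec]
  · simp [doubleStarVec]

theorem sum_doubleStarVec (α β γ δ : ℝ) :
    ∑ v, doubleStarVec (k := k) (s := s) α β γ δ v = α + β + k * γ + s * δ := by
  simp [doubleStarVec, Fintype.sum_sum_type, add_assoc]

variable [DecidableRel (doubleStar k s).Adj]

theorem doubleStar_mulVec_inl_zero (x : Fin 2 ⊕ (Fin k ⊕ Fin s) → ℝ) :
    ((doubleStar k s).adjMatrix ℝ *ᵥ x) (Sum.inl 0) =
      x (Sum.inl 1) + ∑ i : Fin k, x (Sum.inr (Sum.inl i)) := by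
  simp only [Matrix.mulVec, dotProduct, SimpleGraph.adjMatrix_apply]
  simp [Fintype.sum_sum_type, Fin.sum_univ_two, doubleStar]

theorem doubleStar_mulVec_inl_one (x : Fin 2 ⊕ (Fin k ⊕ Fin s) → ℝ) :
    ((doubleStar k s).adjMatrix ℝ *ᵥ x) (Sum.inl 1) =
      x (Sum.inl 0) + ∑ j : Fin s, x (Sum.inr (Sum.inr j)) := by
  simp only [Matrix.mulVec, dotProduct, SimpleGraph.adjMatrix_apply]
  simp [Fintype.sum_sum_type, Fin.sum_univ_two, doubleStar]

theorem doubleStar_mulVec_inr_inl (x : Fin 2 ⊕ (Fin k ⊕ Fin s) → ℝ) (i : Fin k) :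
    ((doubleStar k s).adjMatrix ℝ *ᵥ x) (Sum.inr (Sum.inl i)) = x (Sum.inl 0) := by
  simp only [Matrix.mulVec, dotProduct, SimpleGraph.adjMatrix_apply]
  simp [Fintype.sum_sum_type, doubleStar]

theorem doubleStar_mulVec_inr_inr (x : Fin 2 ⊕ (Fin k ⊕ Fin s) → ℝ) (j : Fin s) :
    ((doubleStar k s).adjMatrix ℝ *ᵥ x) (Sum.inr (Sum.inr j)) = x (Sum.inl 1) := by
  simp only [Matrix.mulVec, dotProduct, SimpleGraph.adjMatrix_apply]
  simp [Fintype.sum_sum_type, doubleStar]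

/-- The quartic kills the centre values `a`, `b`, hence also the leaf sums `C = μa - b` and
`D = μb - a`. -/
theorem doubleStar_quartic_eq_zero_of_isMainEigenvalue {μ : ℝ}
    (h : (doubleStar k s).IsMainEigenvalue μ) :
    μ ^ 4 - ((k : ℝ) + s + 1) * μ ^ 2 + (k : ℝ) * s = 0 := by
  obtain ⟨x, -, hx, hsum⟩ := h
  set a := x (Sum.inl 0)
  set b := x (Sum.inl 1)
  set C := ∑ i : Fin k, x (Sum.inr (Sum.inl i))
  set D := ∑ j : Fin s, x (Sum.inr (Sum.inr j))
  have hx_apply (v) : ((doubleStar k s).adjMatrix ℝ *ᵥ x) v = μ * x v := by rw [hx]; rfl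
  have h₀ : b + C = μ * a := (doubleStar_mulVec_inl_zero x).symm.trans (hx_apply _)
  have h₁ : a + D = μ * b := (doubleStar_mulVec_inl_one x).symm.trans (hx_apply _)
  have h₂ : k * a = μ * C := calc
    (k : ℝ) * a = ∑ _i : Fin k, a := by simp
    _ = μ * C := by
      rw [Finset.mul_sum]
      exact Finset.sum_congr rfl fun i _ => (doubleStar_mulVec_inr_inl x i).symm.trans (hx_apply _)
  have h₃ : s * b = μ * D := calc
    (s : ℝ) * b = ∑ _j : Fin s, b := by simp
    _ = μ * D := by
      rw [Finset.mul_sum]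
      exact Finset.sum_congr rfl fun j _ => (doubleStar_mulVec_inr_inr x j).symm.trans (hx_apply _)
  have hsum' : a + b + C + D ≠ 0 := by
    simpa [Fintype.sum_sum_type, add_assoc] using hsum
  set p := μ ^ 4 - ((k : ℝ) + s + 1) * μ ^ 2 + (k : ℝ) * s
  have hpa : p * a = 0 := by
    linear_combination (-(μ ^ 2 - s) * μ) * h₀ - (μ ^ 2 - s) * h₂ - μ ^ 2 * h₁ - μ * h₃
  have hpb : p * b = 0 := by
    linear_combination (-(μ ^ 2 - k) * μ) * h₁ - (μ ^ 2 - k) * h₃ - μ ^ 2 * h₀ - μ * h₂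
  have hp_sum : p * (a + b + C + D) = 0 := by
    linear_combination p * h₀ + p * h₁ + μ * hpa + μ * hpb
  exact (mul_eq_zero.1 hp_sum).resolve_right hsum'

theorem doubleStar_mulVec_doubleStarVec (α β γ δ : ℝ) :
    (doubleStar k s).adjMatrix ℝ *ᵥ doubleStarVec α β γ δ =
      doubleStarVec (β + k * γ) (α + s * δ) α β := by
  funext v
  rcases v with c | i | j
  · revert c
    refine Fin.forall_fin_two.2 ⟨?_, ?_⟩
    · rw [doubleStar_mulVec_inl_zero]; simp [doubleStarVec]
    · rw [doubleStar_mulVec_inl_one]; simp [doubleStarVec]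
  · rw [doubleStar_mulVec_inr_inl]; simp [doubleStarVec]
  · rw [doubleStar_mulVec_inr_inr]; simp [doubleStarVec]

theorem isMainEigenvalue_doubleStar_of_quotient {μ α β γ δ : ℝ}
    (h₀ : β + k * γ = μ * α) (h₁ : α + s * δ = μ * β) (h₂ : α = μ * γ) (h₃ : β = μ * δ)
    (hsum : α + β + k * γ + s * δ ≠ 0) : (doubleStar k s).IsMainEigenvalue μ := by
  refine (SimpleGraph.isMainEigenvalue_iff _ μ).2
    ⟨doubleStarVec α β γ δ, ?_, by rwa [sum_doubleStarVec]⟩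
  rw [doubleStar_mulVec_doubleStarVec, smul_doubleStarVec, h₀, h₁, ← h₂, ← h₃]

theorem isMainEigenvalue_doubleStar_of_quartic_eq_zero (hks : k ≠ s) {μ : ℝ} (hμ : μ ≠ 0)
    (hp : μ ^ 4 - ((k : ℝ) + s + 1) * μ ^ 2 + (k : ℝ) * s = 0) :
    (doubleStar k s).IsMainEigenvalue μ := by
  by_cases hsum : μ ^ 2 + μ * (μ ^ 2 - k) + k * μ + s * (μ ^ 2 - k) = 0
  · refine isMainEigenvalue_doubleStar_of_quotient (α := μ * (μ ^ 2 - s)) (β := μ ^ 2)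
      (γ := μ ^ 2 - s) (δ := μ) (by linear_combination -hp) (by ring) (by ring) (by ring) ?_
    intro hsum'
    have : ((k : ℝ) - s) * μ ^ 2 = 0 := by linear_combination hsum' - hsum
    exact mul_ne_zero (sub_ne_zero.2 (Nat.cast_injective.ne hks)) (pow_ne_zero 2 hμ) this
  · exact isMainEigenvalue_doubleStar_of_quotient (by ring) (by linear_combination -hp)
      (by ring) (by ring) hsum

end DoubleStar

theorem doubleStar_nonbalanced_four_main (k s : ℕ) (hk : 1 ≤ k) (hs : 1 ≤ s)
    (hks : k ≠ s) [DecidableRel (doubleStar k s).Adj] :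
    {μ : ℝ | (doubleStar k s).IsMainEigenvalue μ} =
        {x : ℝ | x ≠ 0 ∧ x ^ 4 - ((k : ℝ) + s + 1) * x ^ 2 + (k : ℝ) * s = 0} ∧
      {μ : ℝ | (doubleStar k s).IsMainEigenvalue μ}.ncard = 4 := by
  have hks_pos : (0 : ℝ) < k * s := by positivity
  have hroot_ne_zero (x : ℝ) (hx : x ^ 4 - ((k : ℝ) + s + 1) * x ^ 2 + (k : ℝ) * s = 0) :
      x ≠ 0 := by
    rintro rfl
    linarith
  have hmain : {μ : ℝ | (doubleStar k s).IsMainEigenvalue μ} =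
      {x : ℝ | x ^ 4 - ((k : ℝ) + s + 1) * x ^ 2 + (k : ℝ) * s = 0} :=
    Set.ext fun μ => ⟨doubleStar_quartic_eq_zero_of_isMainEigenvalue,
      fun h => isMainEigenvalue_doubleStar_of_quartic_eq_zero hks (hroot_ne_zero μ h) h⟩
  refine ⟨hmain.trans (Set.ext fun x => ⟨fun h => ⟨hroot_ne_zero x h, h⟩, And.right⟩), ?_⟩
  rw [hmain]
  exact Real.ncard_setOf_biquadratic_eq_zero hks_pos
    (by nlinarith [sq_nonneg ((k : ℝ) - s)]) (by positivity)
end
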